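/- Let S and A be nonempty finite sets, P : S → A → PMF S, r : S → A → S → ℝ, and 0 ≤ γ < 1. Then the Bellman optimality operator T has a unique fixed point q* : S × A → ℝ, i.e., there is a unique function q* satisfying the Bellman optimality equation q*(s,a) = Σ_{s'} P(s'|s,a) · (r(s,a,s') + γ · max_{a'} q*(s',a')) for all s ∈ S and a ∈ A. -/

import Mathlib

open Finset

/-- The Bellman optimality operator for a finite discounted MDP:
`(T Q)(s,a) = Σ_{s'} P(s'|s,a) · (r(s,a,s') + γ · max_{a'} Q(s',a'))`. -/
noncomputable def bellmanOpt {S A : Type} [Fintype S] [Fintype A] [Nonempty A]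
    (P : S → A → PMF S) (r : S → A → S → ℝ) (γ : ℝ) (Q : S × A → ℝ) : S × A → ℝ :=
  fun sa => ∑ s' : S, (P sa.1 sa.2 s').toReal *
    (r sa.1 sa.2 s' + γ * univ.sup' univ_nonempty (fun a' : A => Q (s', a')))

/-- The policy evaluation operator for a deterministic stationary policy `π`:
`(T_π Q)(s,a) = Σ_{s'} P(s'|s,a) · (r(s,a,s') + γ · Q(s', π(s')))`. -/
noncomputable def policyEval {S A : Type} [Fintype S]
    (P : S → A → PMF S) (r : S → A → S → ℝ) (γ : ℝ) (pol : S → A)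
    (Q : S × A → ℝ) : S × A → ℝ :=
  fun sa => ∑ s' : S, (P sa.1 sa.2 s').toReal *
    (r sa.1 sa.2 s' + γ * Q (s', pol s'))

lemma pmf_sum_toReal {S : Type} [Fintype S] (p : PMF S) :
    ∑ s : S, (p s).toReal = 1 := by
  rw [← ENNReal.toReal_sum (fun s _ => p.apply_ne_top s)]
  rw [← tsum_fintype (L := SummationFilter.unconditional _)]
  rw [p.tsum_coe, ENNReal.toReal_one]

lemma sup'_abs_sub {A : Type} [Fintype A] [Nonempty A] (f g : A → ℝ) (D : ℝ)
    (h : ∀ a, |f a - g a| ≤ D) :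
    |univ.sup' univ_nonempty f - univ.sup' univ_nonempty g| ≤ D := by
  rw [abs_sub_le_iff]
  constructor
  · rw [sub_le_iff_le_add]
    apply Finset.sup'_le
    intro a _
    have := (abs_sub_le_iff.mp (h a)).1
    have hg : g a ≤ univ.sup' univ_nonempty g := Finset.le_sup' g (mem_univ a)
    linarith
  · rw [sub_le_iff_le_add]
    apply Finset.sup'_le
    intro a _
    have := (abs_sub_le_iff.mp (h a)).2
    have hf : f a ≤ univ.sup' univ_nonempty f := Finset.le_sup' f (mem_univ a)
    linarith

lemma bellman_lipschitz {S A : Type} [Fintype S] [Fintype A] [Nonempty A]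
    (P : S → A → PMF S) (r : S → A → S → ℝ) (γ : ℝ) (hγ0 : 0 ≤ γ) :
    LipschitzWith ⟨γ, hγ0⟩ (bellmanOpt P r γ) := by
  apply LipschitzWith.of_dist_le_mul
  intro Q Q'
  set D := dist Q Q' with hD
  have hD0 : 0 ≤ D := dist_nonneg
  rw [dist_pi_le_iff (by positivity)]
  intro sa
  have key : ∀ s' : S, |univ.sup' univ_nonempty (fun a' : A => Q (s', a')) -
      univ.sup' univ_nonempty (fun a' : A => Q' (s', a'))| ≤ D := by
    intro s'
    apply sup'_abs_sub
    intro a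
    rw [← Real.dist_eq]
    exact dist_le_pi_dist Q Q' (s', a)
  rw [Real.dist_eq, bellmanOpt, bellmanOpt, ← Finset.sum_sub_distrib]
  calc |∑ s' : S, ((P sa.1 sa.2 s').toReal *
        (r sa.1 sa.2 s' + γ * univ.sup' univ_nonempty (fun a' : A => Q (s', a'))) -
        (P sa.1 sa.2 s').toReal *
        (r sa.1 sa.2 s' + γ * univ.sup' univ_nonempty (fun a' : A => Q' (s', a'))))|
      ≤ ∑ s' : S, |(P sa.1 sa.2 s').toReal *
        (r sa.1 sa.2 s' + γ * univ.sup' univ_nonempty (fun a' : A => Q (s', a'))) -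
        (P sa.1 sa.2 s').toReal *
        (r sa.1 sa.2 s' + γ * univ.sup' univ_nonempty (fun a' : A => Q' (s', a')))| :=
        Finset.abs_sum_le_sum_abs _ _
    _ ≤ ∑ s' : S, (P sa.1 sa.2 s').toReal * (γ * D) := by
        apply Finset.sum_le_sum
        intro s' _
        rw [← mul_sub, abs_mul, abs_of_nonneg ENNReal.toReal_nonneg]
        apply mul_le_mul_of_nonneg_left _ ENNReal.toReal_nonneg
        have : r sa.1 sa.2 s' + γ * univ.sup' univ_nonempty (fun a' : A => Q (s', a')) -
            (r sa.1 sa.2 s' + γ * univ.sup' univ_nonempty (fun a' : A => Q' (s', a'))) =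
            γ * (univ.sup' univ_nonempty (fun a' : A => Q (s', a')) -
            univ.sup' univ_nonempty (fun a' : A => Q' (s', a'))) := by ring
        rw [this, abs_mul, abs_of_nonneg hγ0]
        exact mul_le_mul_of_nonneg_left (key s') hγ0
    _ = γ * D := by
        rw [← Finset.sum_mul, pmf_sum_toReal, one_mul]


/-- The Bellman optimality operator has a unique fixed point `q*`, i.e. there is a unique
function satisfying the Bellman optimality equation. -/
theorem bellman_unique_fixed_point {S A : Type} [Fintype S] [Fintype A] [Nonempty S] [Nonempty A]
    (P : S → A → PMF S) (r : S → A → S → ℝ) (γ : ℝ) (hγ0 : 0 ≤ γ) (hγ1 : γ < 1) :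
    ∃! qstar : S × A → ℝ, ∀ (s : S) (a : A),
      qstar (s, a) = bellmanOpt P r γ qstar (s, a) := by
  have hc : ContractingWith ⟨γ, hγ0⟩ (bellmanOpt P r γ) :=
    ⟨by exact_mod_cast hγ1, bellman_lipschitz P r γ hγ0⟩
  have hfix : ∀ (q : S × A → ℝ), (∀ (s : S) (a : A),
      q (s, a) = bellmanOpt P r γ q (s, a)) ↔ Function.IsFixedPt (bellmanOpt P r γ) q := by
    intro q
    constructor
    · intro h
      funext sa
      exact (h sa.1 sa.2).symm
    · intro h s a
      exact congrFun h.symm (s, a)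
  refine ⟨hc.fixedPoint (bellmanOpt P r γ), (hfix _).mpr (hc.fixedPoint_isFixedPt), ?_⟩
  intro q hq
  exact hc.fixedPoint_unique' ((hfix q).mp hq) (hc.fixedPoint_isFixedPt)
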